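/- arXiv:math/0609203 — 9 statements merged into one kernel-verified Lean document; each statement's English description precedes it below -/
import Mathlib

section
/- If u is a vertex of maximum score in an oriented graph D, then every other vertex v of D is weakly reachable within two steps from u. -/
open Finset

/-- Outdegree of a vertex in a digraph given by relation `R`. -/
def outdeg {V : Type*} [Fintype V] (R : V → V → Prop) [DecidableRel R] (v : V) : ℕ :=
  (Finset.univ.filter (fun u => R v u)).card

/-- Indegree of a vertex. -/
def indeg {V : Type*} [Fintype V] (R : V → V → Prop) [DecidableRel R] (v : V) : ℕ :=
  (Finset.univ.filter (fun u => R u v)).card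

/-- Number of vertices `u ≠ v` joined to `v` by no arc. -/
def dstar {V : Type*} [Fintype V] [DecidableEq V] (R : V → V → Prop) [DecidableRel R] (v : V) : ℕ :=
  (Finset.univ.filter (fun u => u ≠ v ∧ ¬ R u v ∧ ¬ R v u)).card

/-- The score `s(v) = n - 1 + d⁺(v) - d⁻(v)` as an integer. -/
def score {V : Type*} [Fintype V] (R : V → V → Prop) [DecidableRel R] (v : V) : ℤ :=
  (Fintype.card V : ℤ) - 1 + (outdeg R v : ℤ) - (indeg R v : ℤ)

/-- `v` is weakly reachable within two steps from `u`. -/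
def WeakReach {V : Type*} (R : V → V → Prop) (u v : V) : Prop :=
  R u v ∨ (¬ R u v ∧ ¬ R v u) ∨
    ∃ w, (R u w ∧ R w v) ∨ (R u w ∧ ¬ R w v ∧ ¬ R v w) ∨ (¬ R u w ∧ ¬ R w u ∧ R w v)

/-- `v` is reachable within two steps from `u`. -/
def Reach {V : Type*} (R : V → V → Prop) (u v : V) : Prop :=
  R u v ∨ ∃ w, R u w ∧ R w v

/-- A weak king: every other vertex is weakly reachable within two steps from `u`. -/
def WeakKing {V : Type*} (R : V → V → Prop) (u : V) : Prop :=
  ∀ v, v ≠ u → WeakReach R u v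

/-- A weak serf: `u` is weakly reachable within two steps from every other vertex. -/
def WeakSerf {V : Type*} (R : V → V → Prop) (u : V) : Prop :=
  ∀ v, v ≠ u → WeakReach R v u

/-- A king: every other vertex is reachable within two steps from `u`. -/
def King {V : Type*} (R : V → V → Prop) (u : V) : Prop :=
  ∀ v, v ≠ u → Reach R u v

/-- An oriented graph: a loopless digraph with no symmetric pair of arcs. -/
def IsOriented {V : Type*} (R : V → V → Prop) : Prop :=
  (∀ v, ¬ R v v) ∧ (∀ u v, R u v → ¬ R v u)


private def gwt {V : Type*} (R : V → V → Prop) [DecidableRel R] (a b : V) : ℤ :=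
  if R a b then 2 else if R b a then 0 else 1

private lemma gwt_nonneg {V : Type*} (R : V → V → Prop) [DecidableRel R] (a b : V) :
    0 ≤ gwt R a b := by
  unfold gwt; split_ifs <;> norm_num

private lemma score_eq_sum {V : Type*} [Fintype V] (R : V → V → Prop) [DecidableRel R]
    (hR : IsOriented R) (a : V) :
    score R a = (∑ b : V, gwt R a b) - 1 := by
  classical
  have hsplit : ∀ b : V, gwt R a b =
      (if R a b then (1:ℤ) else 0) + (if R b a then (0:ℤ) else 1) := by
    intro b
    unfold gwt
    by_cases h1 : R a b
    · simp [h1, hR.2 a b h1]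
    · by_cases h2 : R b a <;> simp [h1, h2]
  have h1 : (∑ b : V, (if R a b then (1:ℤ) else 0)) = (outdeg R a : ℤ) := by
    simp [outdeg, Finset.sum_ite, Finset.sum_const]
  have h2 : (∑ b : V, (if R b a then (0:ℤ) else 1))
      = (Fintype.card V : ℤ) - (indeg R a : ℤ) := by
    simp only [Finset.sum_ite, Finset.sum_const, smul_eq_mul, mul_zero, mul_one, zero_add]
    have : (Finset.univ.filter (fun b => ¬ R b a)).card
        = Fintype.card V - (Finset.univ.filter (fun b => R b a)).card := by
      rw [Finset.filter_not, Finset.card_sdiff_of_subset (Finset.filter_subset _ _)]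
      rfl
    have hle : (Finset.univ.filter (fun b => R b a)).card ≤ Fintype.card V :=
      le_trans (Finset.card_filter_le _ _) (le_of_eq rfl)
    rw [this, indeg]
    simp only [smul_zero, zero_add, nsmul_eq_mul, mul_one, Nat.cast_sub hle]
  rw [Finset.sum_congr rfl (fun b _ => hsplit b), Finset.sum_add_distrib, h1, h2, score]
  ring

theorem max_score_weakReach {V : Type*} [Fintype V] (R : V → V → Prop) [DecidableRel R]
    (hR : IsOriented R) (u : V) (hmax : ∀ v : V, score R v ≤ score R u) :
    ∀ v : V, v ≠ u → WeakReach R u v := by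
  classical
  intro v hv
  by_contra hcon
  unfold WeakReach at hcon
  push_neg at hcon
  obtain ⟨huv, h2, h3⟩ := hcon
  have hvu : R v u := h2 huv
  have key : score R u < score R v := by
    rw [score_eq_sum R hR u, score_eq_sum R hR v]
    have hre : (∑ b : V, gwt R v b) = ∑ b : V, gwt R v (Equiv.swap u v b) :=
      (Equiv.sum_comp (Equiv.swap u v) (gwt R v)).symm
    rw [hre]
    have hlt : (∑ b : V, gwt R u b) < ∑ b : V, gwt R v (Equiv.swap u v b) := by
      apply Finset.sum_lt_sum
      · intro b _
        by_cases hbu : b = u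
        · rw [hbu]
          simp only [Equiv.swap_apply_left]
          unfold gwt
          simp [hR.1 u, hR.1 v]
        by_cases hbv : b = v
        · rw [hbv]
          simp only [Equiv.swap_apply_right]
          unfold gwt
          simp [huv, hvu, hR.2 v u hvu]
        · rw [Equiv.swap_apply_of_ne_of_ne hbu hbv]
          obtain ⟨c1, c2, c3⟩ := h3 b
          unfold gwt
          by_cases hub : R u b
          · have hbv' : ¬ R b v := c1 hub
            have hvb : R v b := c2 hub hbv'
            simp [hub, hvb]
          · by_cases hbu' : R b u
            · split_ifs <;> norm_num
            · have hbv' : ¬ R b v := c3 hub hbu'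
              simp only [hub, hbu', if_false, if_true, hbv']
              split_ifs <;> norm_num
      · refine ⟨v, Finset.mem_univ v, ?_⟩
        simp only [Equiv.swap_apply_right]
        unfold gwt
        simp [huv, hvu, hR.2 v u hvu]
    linarith
  exact absurd (hmax v) (not_le.2 key)
end

section
/- Every vertex of maximum score in an oriented graph is a weak king. -/
open Finset

theorem max_score_weakKing {V : Type*} [Fintype V] (R : V → V → Prop) [DecidableRel R]
    (hR : IsOriented R) (u : V) (hmax : ∀ v : V, score R v ≤ score R u) :
    WeakKing R u := by
  classical
  -- score identity: score x = 2 * outdeg x + (# non-adjacent others)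
  have score_eq : ∀ x : V, score R x =
      2 * (outdeg R x : ℤ) + ((univ.filter fun w => w ≠ x ∧ ¬ R x w ∧ ¬ R w x).card : ℤ) := by
    intro x
    have hcard : Fintype.card V =
        outdeg R x + (indeg R x + (1 + (univ.filter fun w => w ≠ x ∧ ¬ R x w ∧ ¬ R w x).card)) := by
      have h1 : (univ.filter fun w => R x w).card + (univ.filter fun w => ¬ R x w).card
          = Fintype.card V := by
        simpa using Finset.card_filter_add_card_filter_not (s := univ)
          (p := fun w => R x w)
      have h2 : (univ.filter fun w => ¬ R x w).card =
          ((univ.filter fun w => ¬ R x w).filter fun w => R w x).card +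
          ((univ.filter fun w => ¬ R x w).filter fun w => ¬ R w x).card := by
        exact (Finset.card_filter_add_card_filter_not
          (s := univ.filter fun w => ¬ R x w) (p := fun w => R w x)).symm
      have h3 : (univ.filter fun w => ¬ R x w).filter (fun w => R w x)
          = univ.filter fun w => R w x := by
        ext w
        simp only [Finset.mem_filter, Finset.mem_univ, true_and]
        constructor
        · rintro ⟨-, h⟩; exact h
        · intro h; exact ⟨hR.2 w x h, h⟩
      have h4 : (univ.filter fun w => ¬ R x w).filter (fun w => ¬ R w x)
          = insert x (univ.filter fun w => w ≠ x ∧ ¬ R x w ∧ ¬ R w x) := by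
        ext w
        simp only [Finset.mem_filter, Finset.mem_univ, true_and, Finset.mem_insert]
        constructor
        · rintro ⟨h1, h2⟩
          by_cases hw : w = x
          · exact Or.inl hw
          · exact Or.inr ⟨hw, h1, h2⟩
        · rintro (rfl | ⟨-, h1, h2⟩)
          · exact ⟨hR.1 w, hR.1 w⟩
          · exact ⟨h1, h2⟩
      have h5 : x ∉ univ.filter fun w => w ≠ x ∧ ¬ R x w ∧ ¬ R w x := by simp
      have h6 := Finset.card_insert_of_notMem h5
      rw [h4, h6, h3] at h2
      rw [h2] at h1
      rw [outdeg, indeg]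
      omega
    rw [score]
    rw [hcard]
    push_cast
    ring
  intro v hvne
  by_contra hW
  have h1 : ¬ R u v := fun h => hW (Or.inl h)
  have hvu : R v u := by
    by_contra h
    exact hW (Or.inr (Or.inl ⟨h1, h⟩))
  have h3 : ∀ w, ¬((R u w ∧ R w v) ∨ (R u w ∧ ¬ R w v ∧ ¬ R v w) ∨ (¬ R u w ∧ ¬ R w u ∧ R w v)) :=
    fun w h => hW (Or.inr (Or.inr ⟨w, h⟩))
  have key1 : ∀ w, R u w → R v w := by
    intro w huw
    by_contra hvw
    have hwv : ¬ R w v := fun h => h3 w (Or.inl ⟨huw, h⟩)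
    exact h3 w (Or.inr (Or.inl ⟨huw, hwv, hvw⟩))
  have key2 : ∀ w, ¬ R u w → ¬ R w u → ¬ R w v :=
    fun w a b h => h3 w (Or.inr (Or.inr ⟨a, b, h⟩))
  set Ou := univ.filter (fun w => R u w) with hOu
  set Nu := univ.filter (fun w => w ≠ u ∧ ¬ R u w ∧ ¬ R w u) with hNu
  set Ov := univ.filter (fun w => R v w) with hOv
  set Nv := univ.filter (fun w => w ≠ v ∧ ¬ R v w ∧ ¬ R w v) with hNvdef
  -- insert u Ou ∪ (Nu ∩ Ov) ⊆ Ov, with the two parts disjoint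
  have hu_not_Ou : u ∉ Ou := by simp [hOu, hR.1 u]
  have hdisj : Disjoint (insert u Ou) (Nu ∩ Ov) := by
    rw [Finset.disjoint_left]
    intro w hw hw2
    simp only [Finset.mem_insert] at hw
    simp only [Finset.mem_inter, hNu, Finset.mem_filter, Finset.mem_univ, true_and] at hw2
    rcases hw with rfl | hw
    · exact hw2.1.1 rfl
    · simp only [hOu, Finset.mem_filter, Finset.mem_univ, true_and] at hw
      exact hw2.1.2.1 hw
  have hsub : insert u Ou ∪ (Nu ∩ Ov) ⊆ Ov := by
    intro w hw
    simp only [Finset.mem_union, Finset.mem_insert] at hw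
    simp only [hOv, Finset.mem_filter, Finset.mem_univ, true_and]
    rcases hw with (rfl | hw) | hw
    · exact hvu
    · simp only [hOu, Finset.mem_filter, Finset.mem_univ, true_and] at hw
      exact key1 w hw
    · simp only [Finset.mem_inter, hOv, Finset.mem_filter, Finset.mem_univ, true_and] at hw
      exact hw.2
  have hcard1 : Ou.card + 1 + (Nu ∩ Ov).card ≤ Ov.card := by
    have := Finset.card_le_card hsub
    rw [Finset.card_union_of_disjoint hdisj, Finset.card_insert_of_notMem hu_not_Ou] at this
    omega
  -- Nu ⊆ (Nu ∩ Ov) ∪ Nv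
  have hsub2 : Nu ⊆ (Nu ∩ Ov) ∪ Nv := by
    intro w hw
    have hw' := hw
    simp only [hNu, Finset.mem_filter, Finset.mem_univ, true_and] at hw'
    obtain ⟨hwu, huw, hwu2⟩ := hw'
    have hwv : ¬ R w v := key2 w huw hwu2
    have hwnev : w ≠ v := by
      rintro rfl
      exact hwu2 hvu
    by_cases hvw : R v w
    · exact Finset.mem_union_left _ (Finset.mem_inter.2 ⟨hw, by
        simp [hOv, hvw]⟩)
    · exact Finset.mem_union_right _ (by simp [hNvdef, hwnev, hvw, hwv])
  have hcard2 : Nu.card ≤ (Nu ∩ Ov).card + Nv.card :=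
    le_trans (Finset.card_le_card hsub2) (Finset.card_union_le _ _)
  have hsu := score_eq u
  have hsv := score_eq v
  have hm := hmax v
  have houteq : outdeg R u = Ou.card := rfl
  have houteqv : outdeg R v = Ov.card := rfl
  rw [hsu, hsv] at hm
  rw [houteq] at hm
  rw [houteqv] at hm
  rw [show (univ.filter fun w => w ≠ u ∧ ¬ R u w ∧ ¬ R w u) = Nu from rfl,
     show (univ.filter fun w => w ≠ v ∧ ¬ R v w ∧ ¬ R w v) = Nv from rfl] at hm
  have : (Ou.card : ℤ) + 1 + (Nu ∩ Ov).card ≤ Ov.card := by exact_mod_cast hcard1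
  have : (Nu.card : ℤ) ≤ (Nu ∩ Ov).card + Nv.card := by exact_mod_cast hcard2
  omega
end

section
/- An oriented graph with at least one vertex and no transmitter (i.e., every vertex has positive indegree) contains at least three distinct weak kings. -/
open Finset

open Classical in
/-- Auxiliary score: 2 points for each out-neighbor, 1 for each tie. -/
noncomputable def sc {V : Type*} [Fintype V] (R : V → V → Prop) (u : V) : ℤ :=
  ∑ w : V, (if R u w then 2 else if R w u then 0 else if w = u then 0 else 1)

lemma notWeakReach_facts {V : Type*} [Fintype V] (R : V → V → Prop)
    (hR : IsOriented R) {u v : V} (h : ¬ WeakReach R u v) :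
    R v u ∧ (∀ w, R u w → R v w) ∧ sc R u < sc R v := by
  classical
  have huv : ¬ R u v := fun h' => h (Or.inl h')
  have hvu : R v u := by
    by_contra h'; exact h (Or.inr (Or.inl ⟨huv, h'⟩))
  have hstep : ∀ w, R u w → R v w := by
    intro w hw
    by_contra h'
    have hwv : ¬ R w v := fun h2 => h (Or.inr (Or.inr ⟨w, Or.inl ⟨hw, h2⟩⟩))
    exact h (Or.inr (Or.inr ⟨w, Or.inr (Or.inl ⟨hw, hwv, h'⟩)⟩))
  have htie : ∀ w, ¬ R u w → ¬ R w u → ¬ R w v := by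
    intro w h1 h2 h3
    exact h (Or.inr (Or.inr ⟨w, Or.inr (Or.inr ⟨h1, h2, h3⟩)⟩))
  refine ⟨hvu, hstep, ?_⟩
  unfold sc
  refine Finset.sum_lt_sum ?_ ⟨u, Finset.mem_univ u, ?_⟩
  · intro w _
    by_cases hw : R u w
    · simp [hw, hstep w hw]
    · by_cases hw' : R w u
      · simp only [hw, hw', if_true, if_false]
        split_ifs <;> omega
      · by_cases hwu : w = u
        · subst hwu
          simp [hw, hvu]
        · -- tie between u and w
          have hwv : ¬ R w v := htie w hw hw'
          have hwvne : w ≠ v := by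
            rintro rfl; exact hw' hvu
          simp only [hw, hw', hwu, if_false]
          split_ifs <;> omega
  · simp [hR.1 u, hvu]

lemma exists_king_beating {V : Type*} [Fintype V] (R : V → V → Prop)
    (hR : IsOriented R) (hnt : ∀ v : V, ∃ u : V, R u v) (b : V) :
    ∃ k, R k b ∧ WeakKing R k := by
  classical
  obtain ⟨a, ha⟩ := hnt b
  have hBne : (Finset.univ.filter (fun v => R v b)).Nonempty := ⟨a, by simp [ha]⟩
  obtain ⟨k, hk, hmax⟩ := Finset.exists_max_image _ (sc R) hBne
  simp only [Finset.mem_filter, Finset.mem_univ, true_and] at hk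
  refine ⟨k, hk, fun v hv => ?_⟩
  by_contra h
  obtain ⟨hvk, hstep, hlt⟩ := notWeakReach_facts R hR h
  have hvB : v ∈ Finset.univ.filter (fun v => R v b) := by
    simp [hstep b hk]
  exact absurd (hmax v hvB) (by omega)

theorem three_weak_kings {V : Type*} [Fintype V] [Nonempty V] (R : V → V → Prop)
    (hR : IsOriented R) (hnt : ∀ v : V, ∃ u : V, R u v) :
    ∃ a b c : V, a ≠ b ∧ a ≠ c ∧ b ≠ c ∧ WeakKing R a ∧ WeakKing R b ∧ WeakKing R c := by
  obtain ⟨v0⟩ := ‹Nonempty V›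
  obtain ⟨k1, _, hk1⟩ := exists_king_beating R hR hnt v0
  obtain ⟨k2, hk21, hk2⟩ := exists_king_beating R hR hnt k1
  obtain ⟨k3, hk32, hk3⟩ := exists_king_beating R hR hnt k2
  refine ⟨k3, k2, k1, ?_, ?_, ?_, hk3, hk2, hk1⟩
  · rintro rfl; exact hR.1 _ hk32
  · rintro rfl; exact hR.2 _ _ hk21 hk32
  · rintro rfl; exact hR.1 _ hk21
end

section
/- For all integers n ≥ k ≥ 1 there exists an oriented graph on n vertices having exactly k weak kings. -/
open Finset

theorem exists_exactly_k_weak_kings (n k : ℕ) (h1 : 1 ≤ k) (h2 : k ≤ n) :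
    ∃ R : Fin n → Fin n → Prop, IsOriented R ∧
      Nat.card {v : Fin n // WeakKing R v} = k := by
  refine ⟨fun u v => u.val = 0 ∧ k ≤ v.val, ⟨fun v hv => by omega, fun u v h hv => by omega⟩, ?_⟩
  have hkey : ∀ v : Fin n, WeakKing (fun u v : Fin n => u.val = 0 ∧ k ≤ v.val) v ↔ v.val < k := by
    intro v
    constructor
    · intro hwk
      by_contra hge
      push_neg at hge
      have hv0 : (⟨0, by omega⟩ : Fin n) ≠ v := by
        intro h
        have := congrArg Fin.val h
        simp at this
        omega
      have := hwk ⟨0, by omega⟩ hv0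
      rcases this with h | ⟨h1', h2'⟩ | ⟨w, ⟨_, hw⟩ | ⟨⟨hv, _⟩, _⟩ | ⟨_, _, hw⟩⟩
      · omega
      · exact h2' ⟨rfl, hge⟩
      · omega
      · omega
      · omega
    · intro hlt u hu
      by_cases hv0 : v.val = 0
      · by_cases hk : k ≤ u.val
        · exact Or.inl ⟨hv0, hk⟩
        · refine Or.inr (Or.inl ⟨fun h => by omega, fun h => ?_⟩)
          have : u.val = 0 := h.1
          exact hu (Fin.ext (by omega))
      · refine Or.inr (Or.inl ⟨fun h => by omega, fun h => by omega⟩)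
  have e : {v : Fin n // WeakKing (fun u v : Fin n => u.val = 0 ∧ k ≤ v.val) v} ≃ Fin k :=
    { toFun := fun v => ⟨v.1.val, (hkey v.1).mp v.2⟩
      invFun := fun i => ⟨⟨i.val, by omega⟩, (hkey _).mpr i.2⟩
      left_inv := fun v => by ext; rfl
      right_inv := fun i => rfl }
  rw [Nat.card_congr e, Nat.card_eq_fintype_card, Fintype.card_fin]
end

section
/- If a vertex u of an oriented graph D is not a weak serf, then D contains a vertex w with an arc u→w such that w is not a weak king and the arc u→w lies in no intransitive triple of D. -/
open Finset

theorem not_weakSerf_exists_arc {V : Type*} (R : V → V → Prop) (hR : IsOriented R)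
    (u : V) (hu : ¬ WeakSerf R u) :
    ∃ w : V, R u w ∧ ¬ WeakKing R w ∧
      ∀ x : V, x ≠ u → x ≠ w →
        ¬ ((R w x ∧ R x u) ∨ (R w x ∧ ¬ R x u ∧ ¬ R u x) ∨ (¬ R w x ∧ ¬ R x w ∧ R x u)) := by
  rw [WeakSerf, not_forall] at hu
  obtain ⟨v, hv⟩ := hu
  rw [_root_.not_imp] at hv
  obtain ⟨hvne, hnr⟩ := hv
  have hnr' := hnr
  unfold WeakReach at hnr'
  push_neg at hnr'
  obtain ⟨h1, h2, h3⟩ := hnr'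
  have huv : R u v := h2 h1
  have hne : u ≠ v := fun h => hR.1 v (h ▸ huv)
  exact ⟨v, huv, fun hk => hnr (hk u hne), fun x _ _ hx => by
    rcases hx with ⟨a, b⟩ | ⟨a, b, c⟩ | ⟨a, b, c⟩
    · exact (h3 x).1 a b
    · exact c ((h3 x).2.1 a b)
    · exact (h3 x).2.2 a b c⟩
end

section
/- For n > k ≥ s > 0, there is no oriented graph on n vertices with exactly k weak kings and exactly s weak serfs such that every weak serf is also a weak king. -/
open Finset

section Aux

variable {V : Type*} {R : V → V → Prop}

lemma weakReach_refl (hirr : ∀ x, ¬ R x x) (v : V) : WeakReach R v v :=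
  Or.inr (Or.inl ⟨hirr v, hirr v⟩)

lemma not_weakReach_facts {u v : V} (h : ¬ WeakReach R u v) :
    ¬ R u v ∧ R v u ∧ (∀ z, R z v → R z u) ∧ (∀ z, R u z → R v z) := by
  have h1 : ¬ R u v := fun hc => h (Or.inl hc)
  have h2 : R v u := by
    by_contra hc
    exact h (Or.inr (Or.inl ⟨h1, hc⟩))
  have hC : ∀ z, ¬ ((R u z ∧ R z v) ∨ (R u z ∧ ¬ R z v ∧ ¬ R v z) ∨
      (¬ R u z ∧ ¬ R z u ∧ R z v)) := fun z hc => h (Or.inr (Or.inr ⟨z, hc⟩))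
  have s1 : ∀ z, R z v → R z u := by
    intro z hz
    have huz : ¬ R u z := fun hu => hC z (Or.inl ⟨hu, hz⟩)
    by_contra hzu
    exact hC z (Or.inr (Or.inr ⟨huz, hzu, hz⟩))
  have s2 : ∀ z, R u z → R v z := by
    intro z hz
    have hzv : ¬ R z v := fun hc => hC z (Or.inl ⟨hz, hc⟩)
    by_contra hvz
    exact hC z (Or.inr (Or.inl ⟨hz, hzv, hvz⟩))
  exact ⟨h1, h2, s1, s2⟩

lemma weakReach_trans_dom {u v w : V} (h : ¬ WeakReach R u v)
    (hw : WeakReach R w v) : WeakReach R w u := by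
  obtain ⟨h1, h2, s1, s2⟩ := not_weakReach_facts h
  rcases hw with hwv | ⟨hwv, hvw⟩ | ⟨z, hz⟩
  · exact Or.inl (s1 _ hwv)
  · by_cases huw : R u w
    · exact absurd (s2 _ huw) hvw
    · by_cases hwu : R w u
      · exact Or.inl hwu
      · exact Or.inr (Or.inl ⟨hwu, huw⟩)
  · rcases hz with ⟨hwz, hzv⟩ | ⟨hwz, hzv, hvz⟩ | ⟨hwz, hzw, hzv⟩
    · exact Or.inr (Or.inr ⟨z, Or.inl ⟨hwz, s1 _ hzv⟩⟩)
    · by_cases huz : R u z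
      · exact absurd (s2 _ huz) hvz
      · by_cases hzu : R z u
        · exact Or.inr (Or.inr ⟨z, Or.inl ⟨hwz, hzu⟩⟩)
        · exact Or.inr (Or.inr ⟨z, Or.inr (Or.inl ⟨hwz, hzu, huz⟩)⟩)
    · exact Or.inr (Or.inr ⟨z, Or.inr (Or.inr ⟨hwz, hzw, s1 _ hzv⟩)⟩)

lemma score_lt_of_not_weakReach [Fintype V] [DecidableEq V] [DecidableRel R]
    (hirr : ∀ x, ¬ R x x) {u v : V} (h : ¬ WeakReach R u v) :
    score R u < score R v := by
  obtain ⟨h1, h2, s1, s2⟩ := not_weakReach_facts h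
  have hout : outdeg R u + 1 ≤ outdeg R v := by
    have hnm : u ∉ Finset.univ.filter (fun z => R u z) := by simp [hirr u]
    have hsub : insert u (Finset.univ.filter (fun z => R u z)) ⊆
        Finset.univ.filter (fun z => R v z) := by
      intro z hz
      simp only [Finset.mem_insert, Finset.mem_filter, Finset.mem_univ, true_and] at hz ⊢
      rcases hz with rfl | hz
      · exact h2
      · exact s2 _ hz
    calc outdeg R u + 1 = (insert u (Finset.univ.filter (fun z => R u z))).card :=
          (Finset.card_insert_of_notMem hnm).symm
      _ ≤ (Finset.univ.filter (fun z => R v z)).card := Finset.card_le_card hsub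
      _ = outdeg R v := rfl
  have hin : indeg R v + 1 ≤ indeg R u := by
    have hnm : v ∉ Finset.univ.filter (fun z => R z v) := by simp [hirr v]
    have hsub : insert v (Finset.univ.filter (fun z => R z v)) ⊆
        Finset.univ.filter (fun z => R z u) := by
      intro z hz
      simp only [Finset.mem_insert, Finset.mem_filter, Finset.mem_univ, true_and] at hz ⊢
      rcases hz with rfl | hz
      · exact h2
      · exact s1 _ hz
    calc indeg R v + 1 = (insert v (Finset.univ.filter (fun z => R z v))).card :=
          (Finset.card_insert_of_notMem hnm).symm
      _ ≤ (Finset.univ.filter (fun z => R z u)).card := Finset.card_le_card hsub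
      _ = indeg R u := rfl
  unfold score
  omega

end Aux

theorem no_nkss_oriented_graph (n k s : ℕ) (h1 : n > k) (h2 : k ≥ s) (h3 : s > 0) :
    ¬ ∃ R : Fin n → Fin n → Prop, IsOriented R ∧
        Nat.card {v : Fin n // WeakKing R v} = k ∧
        Nat.card {v : Fin n // WeakSerf R v} = s ∧
        (∀ v : Fin n, WeakSerf R v → WeakKing R v) := by
  rintro ⟨R, ⟨hirr, _hasym⟩, hk, _hs, hsk⟩
  classical
  -- there is a vertex that is not a weak king
  obtain ⟨x, hxk⟩ : ∃ x, ¬ WeakKing R x := by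
    by_contra hall
    push_neg at hall
    have hcard : Nat.card {v : Fin n // WeakKing R v} = n := by
      rw [Nat.card_congr (Equiv.subtypeUnivEquiv hall)]
      simp
    have := hk.symm.trans hcard
    omega
  obtain ⟨v, hxv⟩ : ∃ v, ¬ WeakReach R x v := by
    by_contra hall
    push_neg at hall
    exact hxk (fun w _ => hall w)
  set A : Finset (Fin n) := Finset.univ.filter (fun u => ¬ WeakReach R u v) with hA
  have hxA : x ∈ A := by simp [hA, hxv]
  obtain ⟨u, huA, humin⟩ := Finset.exists_min_image A (score R) ⟨x, hxA⟩
  have huv : ¬ WeakReach R u v := by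
    have := huA
    simp only [hA, Finset.mem_filter, Finset.mem_univ, true_and] at this
    exact this
  have hserf : WeakSerf R u := by
    intro w _
    by_contra hwu
    have hwA : w ∈ A := by
      simp only [hA, Finset.mem_filter, Finset.mem_univ, true_and]
      intro hwv
      exact hwu (weakReach_trans_dom huv hwv)
    have hle := humin w hwA
    have hlt := score_lt_of_not_weakReach hirr hwu
    omega
  have hne : v ≠ u := by
    rintro rfl
    exact huv (weakReach_refl hirr v)
  exact huv (hsk u hserf v hne)
end

section
/- For all integers n, k, s, b with n ≥ k ≥ s > b ≥ 0, n > 0, and n ≥ k + s − b, there exists an oriented graph on n vertices with exactly k weak kings, exactly s weak serfs, and exactly b vertices that are both weak kings and weak serfs. -/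
open Finset

/-- Rank function for the construction. -/
def auxf (c₁ c₂ c₃ : ℕ) {n : ℕ} (i : Fin n) : ℕ :=
  if i.val < c₁ then 0 else if i.val < c₂ then 1 else if i.val < c₃ then 2 else 3

/-- The arc relation of the construction. -/
def auxR (c₁ c₂ c₃ : ℕ) {n : ℕ} (u v : Fin n) : Prop :=
  auxf c₁ c₂ c₃ u ≠ 3 ∧ auxf c₁ c₂ c₃ v < auxf c₁ c₂ c₃ u

lemma auxf_cases (c₁ c₂ c₃ : ℕ) {n : ℕ} (v : Fin n) :
    (auxf c₁ c₂ c₃ v = 0 ∧ v.val < c₁) ∨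
    (auxf c₁ c₂ c₃ v = 1 ∧ c₁ ≤ v.val ∧ v.val < c₂) ∨
    (auxf c₁ c₂ c₃ v = 2 ∧ c₂ ≤ v.val ∧ v.val < c₃) ∨
    (auxf c₁ c₂ c₃ v = 3 ∧ c₃ ≤ v.val) := by
  unfold auxf; split_ifs <;> omega

lemma auxR_king {n c₁ c₂ c₃ : ℕ} (h01 : 0 < c₁) (h12 : c₁ ≤ c₂) (h23 : c₂ < c₃)
    (h3n : c₃ ≤ n) (v : Fin n) :
    WeakKing (auxR c₁ c₂ c₃) v ↔ c₂ ≤ v.val := by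
  constructor
  · intro hv
    by_contra hlt
    push_neg at hlt
    have hc₂n : c₂ < n := lt_of_lt_of_le h23 h3n
    set e : Fin n := ⟨c₂, hc₂n⟩ with he
    have heval : e.val = c₂ := rfl
    have hfe : auxf c₁ c₂ c₃ e = 2 := by rcases auxf_cases c₁ c₂ c₃ e with h|h|h|h <;> omega
    have hfv : auxf c₁ c₂ c₃ v ≤ 1 := by rcases auxf_cases c₁ c₂ c₃ v with h|h|h|h <;> omega
    have hev : e ≠ v := by
      intro h
      rw [← h] at hlt
      omega
    have hw := hv e hev
    simp only [WeakReach, auxR] at hw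
    rcases hw with h | h | ⟨w, hw⟩
    · omega
    · exact h.2 ⟨by omega, by omega⟩
    · have hfw : auxf c₁ c₂ c₃ w ≤ 3 := by rcases auxf_cases c₁ c₂ c₃ w with h|h|h|h <;> omega
      omega
  · intro hge u hu
    have hfv : auxf c₁ c₂ c₃ v = 2 ∨ auxf c₁ c₂ c₃ v = 3 := by
      rcases auxf_cases c₁ c₂ c₃ v with h|h|h|h <;> omega
    have hfu : auxf c₁ c₂ c₃ u ≤ 3 := by rcases auxf_cases c₁ c₂ c₃ u with h|h|h|h <;> omega
    simp only [WeakReach, auxR]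
    by_cases harc : auxf c₁ c₂ c₃ v ≠ 3 ∧ auxf c₁ c₂ c₃ u < auxf c₁ c₂ c₃ v
    · exact Or.inl harc
    · exact Or.inr (Or.inl ⟨harc, by omega⟩)

lemma auxR_serf {n c₁ c₂ c₃ : ℕ} (h0n : 0 < n) (h01 : 0 < c₁) (h12 : c₁ ≤ c₂) (h23 : c₂ < c₃)
    (h3n : c₃ ≤ n) (v : Fin n) :
    WeakSerf (auxR c₁ c₂ c₃) v ↔ (v.val < c₁ ∨ c₃ ≤ v.val) := by
  constructor
  · intro hv
    by_contra hc
    push_neg at hc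
    obtain ⟨hc1, hc3⟩ := hc
    set d : Fin n := ⟨0, h0n⟩ with hd
    have hdval : d.val = 0 := rfl
    have hfd : auxf c₁ c₂ c₃ d = 0 := by rcases auxf_cases c₁ c₂ c₃ d with h|h|h|h <;> omega
    have hfv : auxf c₁ c₂ c₃ v = 1 ∨ auxf c₁ c₂ c₃ v = 2 := by
      rcases auxf_cases c₁ c₂ c₃ v with h|h|h|h <;> omega
    have hdv : d ≠ v := by
      intro h
      rw [h] at hdval
      omega
    have hw := hv d hdv
    simp only [WeakReach, auxR] at hw
    rcases hw with h | h | ⟨w, hw⟩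
    · omega
    · exact h.2 ⟨by omega, by omega⟩
    · have hfw : auxf c₁ c₂ c₃ w ≤ 3 := by rcases auxf_cases c₁ c₂ c₃ w with h|h|h|h <;> omega
      omega
  · intro hv u hu
    have hfv : auxf c₁ c₂ c₃ v = 0 ∨ auxf c₁ c₂ c₃ v = 3 := by
      rcases auxf_cases c₁ c₂ c₃ v with h|h|h|h <;> omega
    have hfu : auxf c₁ c₂ c₃ u ≤ 3 := by rcases auxf_cases c₁ c₂ c₃ u with h|h|h|h <;> omega
    simp only [WeakReach, auxR]
    by_cases harc : auxf c₁ c₂ c₃ u ≠ 3 ∧ auxf c₁ c₂ c₃ v < auxf c₁ c₂ c₃ u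
    · exact Or.inl harc
    · exact Or.inr (Or.inl ⟨harc, by omega⟩)

lemma count_lt (n c : ℕ) (h : c ≤ n) :
    (Finset.univ.filter fun v : Fin n => v.val < c).card = c := by
  rcases eq_or_lt_of_le h with rfl | hlt
  · rw [Finset.filter_true_of_mem (fun v _ => v.is_lt)]
    simp
  · have he : (Finset.univ.filter fun v : Fin n => v.val < c) = Finset.Iio ⟨c, hlt⟩ := by
      ext v
      simp [Fin.lt_def]
    rw [he, Fin.card_Iio]

lemma count_ge (n c : ℕ) (h : c ≤ n) :
    (Finset.univ.filter fun v : Fin n => c ≤ v.val).card = n - c := by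
  have h2 := Finset.card_filter_add_card_filter_not
    (s := (Finset.univ : Finset (Fin n))) (p := fun v : Fin n => v.val < c)
  have h3 : (Finset.univ.filter fun v : Fin n => ¬ v.val < c)
      = (Finset.univ.filter fun v : Fin n => c ≤ v.val) := by
    simp [not_lt]
  rw [h3, count_lt n c h] at h2
  simp only [Finset.card_univ, Fintype.card_fin] at h2
  omega

theorem exists_nksb_oriented_graph (n k s b : ℕ) (h1 : n ≥ k) (h2 : k ≥ s) (h3 : s > b)
    (h4 : n > 0) (h5 : n ≥ k + s - b) :
    ∃ R : Fin n → Fin n → Prop, IsOriented R ∧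
      Nat.card {v : Fin n // WeakKing R v} = k ∧
      Nat.card {v : Fin n // WeakSerf R v} = s ∧
      Nat.card {v : Fin n // WeakKing R v ∧ WeakSerf R v} = b := by
  classical
  set c₁ := s - b with hc₁
  set c₂ := n - k with hc₂
  set c₃ := n - b with hc₃
  have h01 : 0 < c₁ := by omega
  have h12 : c₁ ≤ c₂ := by omega
  have h23 : c₂ < c₃ := by omega
  have h3n : c₃ ≤ n := by omega
  refine ⟨auxR c₁ c₂ c₃, ⟨?_, ?_⟩, ?_, ?_, ?_⟩
  · rintro v ⟨-, h⟩
    exact absurd h (lt_irrefl _)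
  · rintro u v ⟨-, h⟩ ⟨-, h'⟩
    omega
  · rw [Nat.card_congr (Equiv.subtypeEquivRight fun v => auxR_king h01 h12 h23 h3n v),
      Nat.card_eq_fintype_card, Fintype.card_subtype, count_ge n c₂ (by omega)]
    omega
  · rw [Nat.card_congr (Equiv.subtypeEquivRight fun v => auxR_serf h4 h01 h12 h23 h3n v),
      Nat.card_eq_fintype_card, Fintype.card_subtype]
    have hdisj : Disjoint (Finset.univ.filter fun v : Fin n => v.val < c₁)
        (Finset.univ.filter fun v : Fin n => c₃ ≤ v.val) := by
      rw [Finset.disjoint_left]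
      intro a ha hb
      simp only [Finset.mem_filter] at ha hb
      omega
    rw [Finset.filter_or, Finset.card_union_of_disjoint hdisj, count_lt n c₁ (by omega),
      count_ge n c₃ h3n]
    omega
  · have hboth : ∀ v : Fin n, (WeakKing (auxR c₁ c₂ c₃) v ∧ WeakSerf (auxR c₁ c₂ c₃) v)
        ↔ c₃ ≤ v.val := by
      intro v
      rw [auxR_king h01 h12 h23 h3n v, auxR_serf h4 h01 h12 h23 h3n v]
      omega
    rw [Nat.card_congr (Equiv.subtypeEquivRight hboth),
      Nat.card_eq_fintype_card, Fintype.card_subtype, count_ge n c₃ h3n]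
    omega
end

section
/- Every oriented graph D on n ≥ 3 vertices with no transmitter is an induced subdigraph of an oriented graph W on 2n vertices such that the weak kings of W are exactly the vertices of D. -/
open Finset

/-!
Put a copy `D₁` of `D` beside it, join every `u` to every copy `v'` of another vertex and every copy
`u'` back to `u`. A vertex `u` of `D` reaches all of `D₁` except `u'` directly and `u'` through the
copy of an in-neighbour of `u`; it reaches every `w` of `D` directly, through `w'` when `w → u`, or
by non-adjacency. A copy `u'` does not weakly reach an in-neighbour `w` of `u`: every vertex of `D`
is adjacent to every vertex of `D₁`; the out-neighbours of `u'` are `u`, adjacent to `w`, and copies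
`x'` with `u → x`, where `x' → w` would force `x = w`; and the only vertex of `D₁` with an arc into
`w` is `w'`, which is adjacent to `u'`.
-/

namespace IsOriented

variable {V : Type*} {R : V → V → Prop}

theorem irrefl (hR : IsOriented R) (v : V) : ¬ R v v := hR.1 v

theorem asymm (hR : IsOriented R) {u v : V} (h : R u v) : ¬ R v u := hR.2 u v h

end IsOriented

theorem Reach.weakReach {V : Type*} {R : V → V → Prop} {u v : V} (h : Reach R u v) :
    WeakReach R u v := by
  rcases h with h | ⟨w, huw, hwv⟩
  · exact Or.inl h
  · exact Or.inr (Or.inr ⟨w, Or.inl ⟨huw, hwv⟩⟩)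

section Doubling

variable {V : Type*} (R : V → V → Prop)

/-- `Sum.inl` is `D`, `Sum.inr` is its copy `D₁`. -/
def doubling : V ⊕ V → V ⊕ V → Prop
  | .inl a, .inl b => R a b
  | .inr a, .inr b => R a b
  | .inl a, .inr b => a ≠ b
  | .inr a, .inl b => a = b

variable {R}

@[simp] theorem doubling_inl_inl (a b : V) : doubling R (.inl a) (.inl b) ↔ R a b := Iff.rfl

@[simp] theorem doubling_inr_inr (a b : V) : doubling R (.inr a) (.inr b) ↔ R a b := Iff.rfl

@[simp] theorem doubling_inl_inr (a b : V) : doubling R (.inl a) (.inr b) ↔ a ≠ b := Iff.rfl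

@[simp] theorem doubling_inr_inl (a b : V) : doubling R (.inr a) (.inl b) ↔ a = b := Iff.rfl

theorem IsOriented.doubling (hR : IsOriented R) : IsOriented (doubling R) := by
  refine ⟨?_, ?_⟩
  · rintro (a | a) <;> simp [hR.irrefl]
  · rintro (a | a) (b | b) <;> simp only [doubling_inl_inl, doubling_inr_inr, doubling_inl_inr,
      doubling_inr_inl]
    · exact hR.asymm
    · exact fun hab hba => hab hba.symm
    · exact fun hab hba => hba hab.symm
    · exact hR.asymm

theorem weakKing_doubling_inl (hirr : ∀ v, ¬ R v v) (hnt : ∀ v, ∃ u, R u v) (a : V) :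
    WeakKing (doubling R) (.inl a) := by
  rintro (b | b) hne
  · have hba : b ≠ a := fun h => hne (h ▸ rfl)
    by_cases hadj : R a b ∨ R b a
    · refine Reach.weakReach ?_
      rcases hadj with hab | hba'
      · exact Or.inl hab
      · exact Or.inr ⟨.inr b, hba.symm, rfl⟩
    · exact Or.inr (Or.inl (not_or.mp hadj))
  · refine Reach.weakReach ?_
    obtain rfl | hab := eq_or_ne a b
    · obtain ⟨u, hu⟩ := hnt a
      have hua : u ≠ a := fun h => hirr a (h ▸ hu)
      exact Or.inr ⟨.inr u, hua.symm, hu⟩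
    · exact Or.inl hab

theorem not_weakReach_doubling_inr_inl (hR : IsOriented R) {a b : V} (hba : R b a) :
    ¬ WeakReach (doubling R) (.inr a) (.inl b) := by
  have hne : a ≠ b := fun h => hR.irrefl a (h ▸ hba)
  rintro (h | ⟨-, h⟩ | ⟨c | c, h | h | h⟩)
  · exact hne h
  · exact h hne.symm
  · obtain ⟨rfl, hab⟩ := h
    exact hR.asymm hba hab
  · obtain ⟨rfl, -, hab⟩ := h
    exact hab hba
  · exact h.2.1 (Ne.symm h.1)
  · obtain ⟨hac, rfl⟩ := h
    exact hR.asymm hba hac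
  · exact h.2.2 (Ne.symm h.2.1)
  · obtain ⟨-, hca, rfl⟩ := h
    exact hca hba

theorem not_weakKing_doubling_inr (hR : IsOriented R) (hnt : ∀ v, ∃ u, R u v) (a : V) :
    ¬ WeakKing (doubling R) (.inr a) := fun hking =>
  let ⟨_, hba⟩ := hnt a
  not_weakReach_doubling_inr_inl hR hba (hking _ Sum.inl_ne_inr)

end Doubling

theorem embed_weak_kings_general {V : Type*}
    (R : V → V → Prop) (hR : IsOriented R) (hnt : ∀ v : V, ∃ u : V, R u v) :
    ∃ R' : (V ⊕ V) → (V ⊕ V) → Prop, IsOriented R' ∧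
      (∀ a b : V, R' (Sum.inl a) (Sum.inl b) ↔ R a b) ∧
      (∀ x : V ⊕ V, WeakKing R' x ↔ ∃ a : V, x = Sum.inl a) := by
  refine ⟨doubling R, hR.doubling, doubling_inl_inl, ?_⟩
  rintro (a | a)
  · exact iff_of_true (weakKing_doubling_inl hR.irrefl hnt a) ⟨a, rfl⟩
  · exact iff_of_false (not_weakKing_doubling_inr hR hnt a) fun ⟨_, h⟩ => Sum.inr_ne_inl h

theorem embed_weak_kings {V : Type*} [Fintype V] (hV : 3 ≤ Fintype.card V)
    (R : V → V → Prop) (hR : IsOriented R) (hnt : ∀ v : V, ∃ u : V, R u v) :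
    ∃ R' : (V ⊕ V) → (V ⊕ V) → Prop, IsOriented R' ∧
      (∀ a b : V, R' (Sum.inl a) (Sum.inl b) ↔ R a b) ∧
      (∀ x : V ⊕ V, WeakKing R' x ↔ ∃ a : V, x = Sum.inl a) :=
  embed_weak_kings_general R hR hnt
end

section
/- For every n ≥ 4 there exists an oriented graph on n vertices (which is not a tournament) having exactly two kings. -/
open Finset

theorem exists_exactly_two_kings (n : ℕ) (hn : 4 ≤ n) :
    ∃ R : Fin n → Fin n → Prop, IsOriented R ∧
      (∃ a b : Fin n, a ≠ b ∧ ¬ R a b ∧ ¬ R b a) ∧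
      Nat.card {v : Fin n // King R v} = 2 := by
  set R : Fin n → Fin n → Prop := fun x y =>
    (x.val = 0 ∧ 2 ≤ y.val) ∨ (x.val = 1 ∧ y.val = 0) ∨ (2 ≤ x.val ∧ y.val = 1) with hR
  refine ⟨R, ⟨fun v => by simp only [hR]; omega, fun u v h => by
    simp only [hR] at h ⊢; omega⟩, ⟨⟨2, by omega⟩, ⟨3, by omega⟩,
    by simp [Fin.ext_iff], by simp only [hR]; omega, by simp only [hR]; omega⟩, ?_⟩
  have v0 : Fin n := ⟨0, by omega⟩
  have hking : {v : Fin n | King R v} = {⟨0, by omega⟩, ⟨1, by omega⟩} := by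
    ext v
    simp only [Set.mem_setOf_eq, Set.mem_insert_iff, Set.mem_singleton_iff, Fin.ext_iff]
    constructor
    · intro hk
      by_contra hc
      push_neg at hc
      have hv2 : 2 ≤ v.val := by omega
      -- pick target with val ≥ 2, different from v
      have hv' : ∃ v' : Fin n, 2 ≤ v'.val ∧ v' ≠ v := by
        by_cases h2 : v.val = 2
        · exact ⟨⟨3, by omega⟩, by simp, by simp [Fin.ext_iff]; omega⟩
        · exact ⟨⟨2, by omega⟩, by simp, by simp [Fin.ext_iff]; omega⟩
      obtain ⟨v', hv'2, hne⟩ := hv'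
      rcases hk v' hne with h | ⟨w, hw1, hw2⟩
      · simp only [hR] at h; omega
      · simp only [hR] at hw1 hw2; omega
    · rintro (h0 | h1)
      · intro v' hv'
        have : v'.val ≠ 0 := fun h => hv' (Fin.ext (by omega))
        by_cases h1 : v'.val = 1
        · exact Or.inr ⟨⟨2, by omega⟩, by simp only [hR]; simp; omega,
            by simp only [hR]; simp; omega⟩
        · exact Or.inl (by simp only [hR]; omega)
      · intro v' hv'
        have : v'.val ≠ 1 := fun h => hv' (Fin.ext (by omega))
        by_cases h0 : v'.val = 0
        · exact Or.inl (by simp only [hR]; omega)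
        · exact Or.inr ⟨⟨0, by omega⟩, by simp only [hR]; simp; omega,
            by simp only [hR]; simp; omega⟩
  have : Nat.card {v : Fin n // King R v} = Set.ncard {v : Fin n | King R v} :=
    Nat.card_coe_set_eq _
  rw [this, hking, Set.ncard_pair (by simp [Fin.ext_iff])]
end
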